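/- arXiv:2504.00136 — 5 statements merged into one kernel-verified Lean document; each statement's English description precedes it below -/
import Mathlib

section
/- Under condition (C) and assuming Ŷ and Ẑ are linearly independent, the vector ω̂ = α q₁ + β q₂ satisfies ‖ω̂‖ = 1 and ⟨ε̂(ω̂), ε̂_Z(ω̂)⟩ = 0; in particular, there exists a unit vector ω ∈ ℝ^K for which the OLS residual of y on Xω is orthogonal to the OLS residual of z on Xω (so that adding z as a regressor does not decrease the residual sum of squares, i.e., the likelihood-ratio objective L(ω) is zero). -/
set_option maxHeartbeats 1000000


open Matrix

/-- The Euclidean norm of a vector in `Fin n → ℝ`. -/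
noncomputable def euclNorm {n : ℕ} (v : Fin n → ℝ) : ℝ := Real.sqrt (v ⬝ᵥ v)

/-- Under condition (C) and linear independence of `Ŷ = Xᵀy` and `Ẑ = Xᵀz`,
the vector `ω̂ = α q₁ + β q₂` is a unit vector for which the OLS residual of `y`
on `Xω̂` is orthogonal to the OLS residual of `z` on `Xω̂`; in particular such a
unit vector exists. -/
theorem unit_vector_with_orthogonal_residuals
    (N K : ℕ) (hN : 0 < N) (hK : 0 < K)
    (y z : Fin N → ℝ) (X : Matrix (Fin N) (Fin K) ℝ)
    (hX : Xᵀ * X = 1)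
    (Yh Zh : Fin K → ℝ) (hYh : Yh = Xᵀ.mulVec y) (hZh : Zh = Xᵀ.mulVec z)
    (hC1 : (-(euclNorm Yh * euclNorm Zh) + Yh ⬝ᵥ Zh) / 2 < y ⬝ᵥ z)
    (hC2 : y ⬝ᵥ z < (euclNorm Yh * euclNorm Zh + Yh ⬝ᵥ Zh) / 2)
    (hli : LinearIndependent ℝ ![Yh, Zh])
    (q1 q2 : Fin K → ℝ)
    (hq1 : q1 = (euclNorm (euclNorm Yh • Zh + euclNorm Zh • Yh))⁻¹ •
        (euclNorm Yh • Zh + euclNorm Zh • Yh))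
    (hq2 : q2 = (euclNorm (euclNorm Yh • Zh - euclNorm Zh • Yh))⁻¹ •
        (euclNorm Yh • Zh - euclNorm Zh • Yh))
    (s1 s2 α β : ℝ)
    (hs1 : s1 = y ⬝ᵥ z - (euclNorm Yh * euclNorm Zh + Yh ⬝ᵥ Zh) / 2)
    (hs2 : s2 = y ⬝ᵥ z + (euclNorm Yh * euclNorm Zh - Yh ⬝ᵥ Zh) / 2)
    (hα : α = Real.sqrt (s2 / (s2 - s1)))
    (hβ : β = Real.sqrt (-s1 / (s2 - s1)))
    (ω : Fin K → ℝ) (hω : ω = α • q1 + β • q2) :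
    euclNorm ω = 1 ∧
      (y - (y ⬝ᵥ X.mulVec ω) • X.mulVec ω) ⬝ᵥ (z - (z ⬝ᵥ X.mulVec ω) • X.mulVec ω) = 0 ∧
      ∃ w : Fin K → ℝ, euclNorm w = 1 ∧
        (y - (y ⬝ᵥ X.mulVec w) • X.mulVec w) ⬝ᵥ (z - (z ⬝ᵥ X.mulVec w) • X.mulVec w) = 0 := by
  have hdotnn : ∀ (v : Fin K → ℝ), 0 ≤ v ⬝ᵥ v := fun v =>
    Finset.sum_nonneg fun i _ => mul_self_nonneg _
  set a := euclNorm Yh with ha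
  set b := euclNorm Zh with hb
  set c := Yh ⬝ᵥ Zh with hc
  set t := y ⬝ᵥ z with ht
  set w1 : Fin K → ℝ := a • Zh + b • Yh with hw1
  set w2 : Fin K → ℝ := a • Zh - b • Yh with hw2
  set n1 := euclNorm w1 with hn1
  set n2 := euclNorm w2 with hn2
  have ha2 : a ^ 2 = Yh ⬝ᵥ Yh := by
    rw [ha]; unfold euclNorm; rw [Real.sq_sqrt (hdotnn _)]
  have hb2 : b ^ 2 = Zh ⬝ᵥ Zh := by
    rw [hb]; unfold euclNorm; rw [Real.sq_sqrt (hdotnn _)]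
  have ha0 : 0 ≤ a := Real.sqrt_nonneg _
  have hb0 : 0 ≤ b := Real.sqrt_nonneg _
  -- nonvanishing
  have hYne : Yh ≠ 0 := by
    have := hli.ne_zero 0
    simpa using this
  have hZne : Zh ≠ 0 := by
    have := hli.ne_zero 1
    simpa using this
  have hapos : 0 < a := by
    rw [ha]; unfold euclNorm
    apply Real.sqrt_pos.2
    exact lt_of_le_of_ne (hdotnn _) (Ne.symm (mt dotProduct_self_eq_zero.mp hYne))
  have hbpos : 0 < b := by
    rw [hb]; unfold euclNorm
    apply Real.sqrt_pos.2
    exact lt_of_le_of_ne (hdotnn _) (Ne.symm (mt dotProduct_self_eq_zero.mp hZne))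
  have hw1ne : w1 ≠ 0 := by
    intro h
    have h' : b • Yh + a • Zh = 0 := by rw [hw1] at h; linear_combination (norm := abel) h
    have := (LinearIndependent.pair_iff.mp hli b a h').2
    exact hapos.ne' this
  have hw2ne : w2 ≠ 0 := by
    intro h
    have h' : (-b) • Yh + a • Zh = 0 := by
      rw [hw2, sub_eq_add_neg, add_comm, ← neg_smul] at h
      exact h
    have := (LinearIndependent.pair_iff.mp hli (-b) a h').2
    exact hapos.ne' this
  have hn1pos : 0 < n1 := by
    rw [hn1]; unfold euclNorm
    exact Real.sqrt_pos.2 (lt_of_le_of_ne (hdotnn _) (Ne.symm (mt dotProduct_self_eq_zero.mp hw1ne)))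
  have hn2pos : 0 < n2 := by
    rw [hn2]; unfold euclNorm
    exact Real.sqrt_pos.2 (lt_of_le_of_ne (hdotnn _) (Ne.symm (mt dotProduct_self_eq_zero.mp hw2ne)))
  -- dot products with w1, w2
  have dYw1 : Yh ⬝ᵥ w1 = a * c + b * a ^ 2 := by
    rw [hw1]; simp [dotProduct_add, dotProduct_smul, smul_eq_mul, ← hc, ← ha2]
  have dYw2 : Yh ⬝ᵥ w2 = a * c - b * a ^ 2 := by
    rw [hw2]; simp [dotProduct_sub, dotProduct_smul, smul_eq_mul, ← hc, ← ha2]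
  have dZw1 : Zh ⬝ᵥ w1 = a * b ^ 2 + b * c := by
    rw [hw1]; simp [dotProduct_add, dotProduct_smul, smul_eq_mul, ← hb2, dotProduct_comm Zh Yh, ← hc]
  have dZw2 : Zh ⬝ᵥ w2 = a * b ^ 2 - b * c := by
    rw [hw2]; simp [dotProduct_sub, dotProduct_smul, smul_eq_mul, ← hb2, dotProduct_comm Zh Yh, ← hc]
  have dw1w1 : w1 ⬝ᵥ w1 = 2 * a * b * (a * b + c) := by
    rw [hw1]
    simp [dotProduct_add, add_dotProduct, dotProduct_smul, smul_dotProduct, smul_eq_mul,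
      ← hc, ← ha2, ← hb2, dotProduct_comm Zh Yh]
    ring
  have dw2w2 : w2 ⬝ᵥ w2 = 2 * a * b * (a * b - c) := by
    rw [hw2]
    simp [dotProduct_sub, sub_dotProduct, dotProduct_smul, smul_dotProduct, smul_eq_mul,
      ← hc, ← ha2, ← hb2, dotProduct_comm Zh Yh]
    ring
  have dw1w2 : w1 ⬝ᵥ w2 = 0 := by
    rw [hw1, hw2]
    simp [dotProduct_sub, add_dotProduct, dotProduct_smul, smul_dotProduct, smul_eq_mul,
      ← hc, ← ha2, ← hb2, dotProduct_comm Zh Yh]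
    ring
  have hn1sq : n1 ^ 2 = 2 * a * b * (a * b + c) := by
    rw [hn1]; unfold euclNorm; rw [Real.sq_sqrt (hdotnn _)]; exact dw1w1
  have hn2sq : n2 ^ 2 = 2 * a * b * (a * b - c) := by
    rw [hn2]; unfold euclNorm; rw [Real.sq_sqrt (hdotnn _)]; exact dw2w2
  have habc1 : 0 < a * b + c := by
    have h := pow_pos hn1pos 2
    rw [hn1sq] at h
    rcases mul_pos_iff.mp h with ⟨_, h'⟩ | ⟨h', _⟩
    · exact h'
    · nlinarith [mul_pos hapos hbpos]
  have habc2 : 0 < a * b - c := by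
    have h := pow_pos hn2pos 2
    rw [hn2sq] at h
    rcases mul_pos_iff.mp h with ⟨_, h'⟩ | ⟨h', _⟩
    · exact h'
    · nlinarith [mul_pos hapos hbpos]
  -- s facts
  have hs1neg : s1 < 0 := by rw [hs1]; linarith
  have hs2pos : 0 < s2 := by rw [hs2]; linarith
  have hss : s2 - s1 = a * b := by rw [hs1, hs2]; ring
  have habpos : 0 < a * b := mul_pos hapos hbpos
  have hα2 : α ^ 2 = s2 / (a * b) := by
    rw [hα, Real.sq_sqrt (by rw [hss]; exact div_nonneg hs2pos.le habpos.le), hss]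
  have hβ2 : β ^ 2 = -s1 / (a * b) := by
    rw [hβ, Real.sq_sqrt (by rw [hss]; exact div_nonneg (by linarith) habpos.le), hss]
  -- dot products with q1, q2
  have dq1q1 : q1 ⬝ᵥ q1 = 1 := by
    rw [hq1]
    simp only [smul_dotProduct, dotProduct_smul, smul_eq_mul, dw1w1]
    rw [← hn1sq]
    field_simp
  have dq2q2 : q2 ⬝ᵥ q2 = 1 := by
    rw [hq2]
    simp only [smul_dotProduct, dotProduct_smul, smul_eq_mul, dw2w2]
    rw [← hn2sq]
    field_simp
  have dq1q2 : q1 ⬝ᵥ q2 = 0 := by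
    rw [hq1, hq2]
    simp only [smul_dotProduct, dotProduct_smul, smul_eq_mul, dw1w2]
    ring
  have dYq1 : Yh ⬝ᵥ q1 = n1⁻¹ * (a * c + b * a ^ 2) := by
    rw [hq1]; simp only [dotProduct_smul, smul_eq_mul, dYw1]
  have dYq2 : Yh ⬝ᵥ q2 = n2⁻¹ * (a * c - b * a ^ 2) := by
    rw [hq2]; simp only [dotProduct_smul, smul_eq_mul, dYw2]
  have dZq1 : Zh ⬝ᵥ q1 = n1⁻¹ * (a * b ^ 2 + b * c) := by
    rw [hq1]; simp only [dotProduct_smul, smul_eq_mul, dZw1]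
  have dZq2 : Zh ⬝ᵥ q2 = n2⁻¹ * (a * b ^ 2 - b * c) := by
    rw [hq2]; simp only [dotProduct_smul, smul_eq_mul, dZw2]
  -- dot products with ω
  have dωω : ω ⬝ᵥ ω = 1 := by
    rw [hω]
    simp only [dotProduct_add, add_dotProduct, dotProduct_smul, smul_dotProduct, smul_eq_mul,
      dq1q1, dq2q2, dq1q2, dotProduct_comm q2 q1]
    have h1 : α ^ 2 + β ^ 2 = 1 := by
      rw [hα2, hβ2, ← add_div, show s2 + -s1 = a * b by linarith [hss],
        div_self habpos.ne']
    linear_combination h1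
  have hnorm : euclNorm ω = 1 := by
    unfold euclNorm; rw [dωω, Real.sqrt_one]
  -- the key scalar identity
  have dYω : Yh ⬝ᵥ ω = α * (n1⁻¹ * (a * c + b * a ^ 2)) + β * (n2⁻¹ * (a * c - b * a ^ 2)) := by
    rw [hω]; simp only [dotProduct_add, dotProduct_smul, smul_eq_mul, dYq1, dYq2]
  have dZω : Zh ⬝ᵥ ω = α * (n1⁻¹ * (a * b ^ 2 + b * c)) + β * (n2⁻¹ * (a * b ^ 2 - b * c)) := by
    rw [hω]; simp only [dotProduct_add, dotProduct_smul, smul_eq_mul, dZq1, dZq2]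
  have key : (Yh ⬝ᵥ ω) * (Zh ⬝ᵥ ω) = t := by
    rw [dYω, dZω]
    have h1 : n1⁻¹ ^ 2 * (2 * a * b * (a * b + c)) = 1 := by
      rw [← hn1sq]; field_simp
    have h2 : n2⁻¹ ^ 2 * (2 * a * b * (a * b - c)) = 1 := by
      rw [← hn2sq]; field_simp
    have h3 : α ^ 2 * ((a * b + c) / 2) - β ^ 2 * ((a * b - c) / 2) = t := by
      rw [hα2, hβ2, hs1, hs2]
      field_simp
      ring
    linear_combination (α ^ 2 * (a * b + c) / 2) * h1 - (β ^ 2 * (a * b - c) / 2) * h2 + h3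
  -- translate to the ambient space
  have hyX : ∀ v : Fin K → ℝ, y ⬝ᵥ X.mulVec v = Yh ⬝ᵥ v := by
    intro v
    rw [dotProduct_mulVec, ← Matrix.mulVec_transpose, ← hYh]
  have hzX : ∀ v : Fin K → ℝ, z ⬝ᵥ X.mulVec v = Zh ⬝ᵥ v := by
    intro v
    rw [dotProduct_mulVec, ← Matrix.mulVec_transpose, ← hZh]
  have hXX : (X.mulVec ω) ⬝ᵥ (X.mulVec ω) = 1 := by
    rw [dotProduct_mulVec, ← Matrix.mulVec_transpose, Matrix.mulVec_mulVec, hX,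
      Matrix.one_mulVec, dωω]
  have horth : (y - (y ⬝ᵥ X.mulVec ω) • X.mulVec ω) ⬝ᵥ (z - (z ⬝ᵥ X.mulVec ω) • X.mulVec ω) = 0 := by
    simp only [sub_dotProduct, dotProduct_sub, dotProduct_smul, smul_dotProduct, smul_eq_mul]
    rw [hyX ω, hzX ω, hXX]
    have hηz : (X.mulVec ω) ⬝ᵥ z = Zh ⬝ᵥ ω := by rw [dotProduct_comm]; exact hzX ω
    have hηy : (X.mulVec ω) ⬝ᵥ y = Yh ⬝ᵥ ω := by rw [dotProduct_comm]; exact hyX ω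
    rw [hηz, ← ht]
    linear_combination (-1 : ℝ) * key
  exact ⟨hnorm, horth, ω, hnorm, horth⟩
end

section
/- Under condition (C) and assuming Ŷ and Ẑ are linearly independent, both vectors ω̂₊ = α q₁ + β q₂ and ω̂₋ = α q₁ − β q₂ satisfy ‖ω̂₊‖ = ‖ω̂₋‖ = 1 and ⟨ω̂₊, A ω̂₊⟩ = ⟨ω̂₋, A ω̂₋⟩ = 0. -/
open Matrix

lemma dot_self_nonneg' {n : ℕ} (v : Fin n → ℝ) : 0 ≤ v ⬝ᵥ v :=
  Finset.sum_nonneg fun _ _ => mul_self_nonneg _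

lemma euclNorm_sq' {n : ℕ} (v : Fin n → ℝ) : euclNorm v ^ 2 = v ⬝ᵥ v :=
  Real.sq_sqrt (dot_self_nonneg' v)

lemma euclNorm_pos' {n : ℕ} {v : Fin n → ℝ} (hv : v ≠ 0) : 0 < euclNorm v :=
  Real.sqrt_pos.mpr (lt_of_le_of_ne (dot_self_nonneg' v)
    (fun h => hv (dotProduct_self_eq_zero.mp h.symm)))

lemma vecMulVec_mulVec' {n : ℕ} (u v x : Fin n → ℝ) :
    (vecMulVec u v).mulVec x = (v ⬝ᵥ x) • u := by
  ext i
  simp only [vecMulVec, mulVec, dotProduct, Pi.smul_apply, smul_eq_mul, Finset.sum_mul, of_apply]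
  exact Finset.sum_congr rfl fun j _ => by ring


lemma pos_of_mul_pos_left'' {x y : ℝ} (h : 0 < x * y) (hx : 0 < x) : 0 < y := by
  rcases mul_pos_iff.mp h with ⟨_, hy⟩ | ⟨hx', _⟩
  · exact hy
  · linarith

set_option maxHeartbeats 1000000 in
/-- Under condition (C) and linear independence of `Ŷ = Xᵀy` and `Ẑ = Xᵀz`, both
`ω̂₊ = α q₁ + β q₂` and `ω̂₋ = α q₁ − β q₂` are unit vectors annihilating the
quadratic form given by `A = ⟨y,z⟩ I − (ŶẐᵀ + ẐŶᵀ)/2`. -/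
theorem both_roots_are_unit_zeros_of_quadratic_form
    (N K : ℕ) (hN : 0 < N) (hK : 0 < K)
    (y z : Fin N → ℝ) (X : Matrix (Fin N) (Fin K) ℝ)
    (hX : Xᵀ * X = 1)
    (Yh Zh : Fin K → ℝ) (hYh : Yh = Xᵀ.mulVec y) (hZh : Zh = Xᵀ.mulVec z)
    (A : Matrix (Fin K) (Fin K) ℝ)
    (hA : A = (y ⬝ᵥ z) • (1 : Matrix (Fin K) (Fin K) ℝ) -
        (2⁻¹ : ℝ) • (vecMulVec Yh Zh + vecMulVec Zh Yh))
    (hC1 : (-(euclNorm Yh * euclNorm Zh) + Yh ⬝ᵥ Zh) / 2 < y ⬝ᵥ z)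
    (hC2 : y ⬝ᵥ z < (euclNorm Yh * euclNorm Zh + Yh ⬝ᵥ Zh) / 2)
    (hli : LinearIndependent ℝ ![Yh, Zh])
    (q1 q2 : Fin K → ℝ)
    (hq1 : q1 = (euclNorm (euclNorm Yh • Zh + euclNorm Zh • Yh))⁻¹ •
        (euclNorm Yh • Zh + euclNorm Zh • Yh))
    (hq2 : q2 = (euclNorm (euclNorm Yh • Zh - euclNorm Zh • Yh))⁻¹ •
        (euclNorm Yh • Zh - euclNorm Zh • Yh))
    (s1 s2 α β : ℝ)
    (hs1 : s1 = y ⬝ᵥ z - (euclNorm Yh * euclNorm Zh + Yh ⬝ᵥ Zh) / 2)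
    (hs2 : s2 = y ⬝ᵥ z + (euclNorm Yh * euclNorm Zh - Yh ⬝ᵥ Zh) / 2)
    (hα : α = Real.sqrt (s2 / (s2 - s1)))
    (hβ : β = Real.sqrt (-s1 / (s2 - s1)))
    (ωp ωm : Fin K → ℝ) (hωp : ωp = α • q1 + β • q2) (hωm : ωm = α • q1 - β • q2) :
    euclNorm ωp = 1 ∧ euclNorm ωm = 1 ∧
      ωp ⬝ᵥ A.mulVec ωp = 0 ∧ ωm ⬝ᵥ A.mulVec ωm = 0 := by
  -- abbreviations
  set a := euclNorm Yh with hadef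
  set b := euclNorm Zh with hbdef
  set c := Yh ⬝ᵥ Zh with hcdef
  set p := y ⬝ᵥ z with hpdef
  set u1 : Fin K → ℝ := a • Zh + b • Yh with hu1def
  set u2 : Fin K → ℝ := a • Zh - b • Yh with hu2def
  set n1 := euclNorm u1 with hn1def
  set n2 := euclNorm u2 with hn2def
  -- nonzero vectors
  have hY0 : Yh ≠ 0 := by have := hli.ne_zero 0; simpa using this
  have hZ0 : Zh ≠ 0 := by have := hli.ne_zero 1; simpa using this
  have ha : 0 < a := euclNorm_pos' hY0
  have hb : 0 < b := euclNorm_pos' hZ0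
  have haa : Yh ⬝ᵥ Yh = a ^ 2 := (euclNorm_sq' Yh).symm
  have hbb : Zh ⬝ᵥ Zh = b ^ 2 := (euclNorm_sq' Zh).symm
  have hZY : Zh ⬝ᵥ Yh = c := dotProduct_comm Zh Yh
  have hpair := LinearIndependent.pair_iff.mp hli
  have hu1ne : u1 ≠ 0 := by
    intro h
    have : b • Yh + a • Zh = 0 := by rw [← h, hu1def]; abel
    exact ha.ne' (hpair b a this).2
  have hu2ne : u2 ≠ 0 := by
    intro h
    have : (-b) • Yh + a • Zh = 0 := by
      rw [neg_smul, ← h, hu2def]; abel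
    exact ha.ne' (hpair (-b) a this).2
  have hn1 : 0 < n1 := euclNorm_pos' hu1ne
  have hn2 : 0 < n2 := euclNorm_pos' hu2ne
  have hn1sq : n1 ^ 2 = u1 ⬝ᵥ u1 := euclNorm_sq' u1
  have hn2sq : n2 ^ 2 = u2 ⬝ᵥ u2 := euclNorm_sq' u2
  -- dot product expansions
  have e1 : n1 ^ 2 = 2 * a * b * (a * b + c) := by
    rw [hn1sq, hu1def]
    simp only [dotProduct_add, add_dotProduct, smul_dotProduct, dotProduct_smul, smul_eq_mul]
    linear_combination a * a * hbb + b * b * haa + a * b * hZY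
  have e2 : n2 ^ 2 = 2 * a * b * (a * b - c) := by
    rw [hn2sq, hu2def]
    simp only [dotProduct_sub, sub_dotProduct, smul_dotProduct, dotProduct_smul, smul_eq_mul]
    linear_combination a * a * hbb + b * b * haa - a * b * hZY
  have e12 : u1 ⬝ᵥ u2 = 0 := by
    rw [hu1def, hu2def]
    simp only [dotProduct_sub, dotProduct_add, add_dotProduct, smul_dotProduct,
      dotProduct_smul, smul_eq_mul]
    linear_combination a * a * hbb - b * b * haa + (a * b) * (dotProduct_comm Yh Zh)
  have fY1 : Yh ⬝ᵥ u1 = a * c + b * a ^ 2 := by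
    rw [hu1def]
    simp only [dotProduct_add, dotProduct_smul, smul_eq_mul]
    linear_combination b * haa
  have fZ1 : Zh ⬝ᵥ u1 = a * b ^ 2 + b * c := by
    rw [hu1def]
    simp only [dotProduct_add, dotProduct_smul, smul_eq_mul]
    linear_combination a * hbb + b * hZY
  have fY2 : Yh ⬝ᵥ u2 = a * c - b * a ^ 2 := by
    rw [hu2def]
    simp only [dotProduct_sub, dotProduct_smul, smul_eq_mul]
    linear_combination (-b) * haa
  have fZ2 : Zh ⬝ᵥ u2 = a * b ^ 2 - b * c := by
    rw [hu2def]
    simp only [dotProduct_sub, dotProduct_smul, smul_eq_mul]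
    linear_combination a * hbb - b * hZY
  -- q facts
  have g11 : q1 ⬝ᵥ q1 = 1 := by
    rw [hq1]
    simp only [dotProduct_smul, smul_dotProduct, smul_eq_mul]
    have h : u1 ⬝ᵥ u1 = n1 * n1 := by rw [← hn1sq]; ring
    rw [h]
    field_simp
  have g22 : q2 ⬝ᵥ q2 = 1 := by
    rw [hq2]
    simp only [dotProduct_smul, smul_dotProduct, smul_eq_mul]
    have h : u2 ⬝ᵥ u2 = n2 * n2 := by rw [← hn2sq]; ring
    rw [h]
    field_simp
  have g12 : q1 ⬝ᵥ q2 = 0 := by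
    rw [hq1, hq2]
    simp only [dotProduct_smul, smul_dotProduct, smul_eq_mul]
    rw [e12]
    ring
  have g21 : q2 ⬝ᵥ q1 = 0 := by rw [dotProduct_comm, g12]
  have gY1 : Yh ⬝ᵥ q1 = n1⁻¹ * (a * c + b * a ^ 2) := by
    rw [hq1, dotProduct_smul, smul_eq_mul, fY1]
  have gZ1 : Zh ⬝ᵥ q1 = n1⁻¹ * (a * b ^ 2 + b * c) := by
    rw [hq1, dotProduct_smul, smul_eq_mul, fZ1]
  have gY2 : Yh ⬝ᵥ q2 = n2⁻¹ * (a * c - b * a ^ 2) := by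
    rw [hq2, dotProduct_smul, smul_eq_mul, fY2]
  have gZ2 : Zh ⬝ᵥ q2 = n2⁻¹ * (a * b ^ 2 - b * c) := by
    rw [hq2, dotProduct_smul, smul_eq_mul, fZ2]
  -- quadratic form
  have hquad : ∀ v : Fin K → ℝ, v ⬝ᵥ A.mulVec v = p * (v ⬝ᵥ v) - (Yh ⬝ᵥ v) * (Zh ⬝ᵥ v) := by
    intro v
    rw [hA]
    rw [sub_mulVec, smul_mulVec, smul_mulVec, one_mulVec, add_mulVec,
      vecMulVec_mulVec', vecMulVec_mulVec']
    simp only [dotProduct_sub, dotProduct_smul, dotProduct_add, smul_eq_mul, ← hpdef]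
    rw [dotProduct_comm v Yh, dotProduct_comm v Zh]
    ring
  -- scalar facts
  have habs : s2 - s1 = a * b := by rw [hs1, hs2]; ring
  have hs1neg : s1 < 0 := by rw [hs1]; linarith
  have hs2pos : 0 < s2 := by rw [hs2]; linarith
  have hab : (0:ℝ) < a * b := mul_pos ha hb
  have hα2 : α ^ 2 * (a * b) = s2 := by
    rw [hα, Real.sq_sqrt (by rw [habs]; exact div_nonneg hs2pos.le hab.le), habs]
    field_simp
  -- the main generic step
  have key : ∀ β' : ℝ, β' ^ 2 * (a * b) = -s1 →
      euclNorm (α • q1 + β' • q2) = 1 ∧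
        (α • q1 + β' • q2) ⬝ᵥ A.mulVec (α • q1 + β' • q2) = 0 := by
    intro β' hβ2
    set w : Fin K → ℝ := α • q1 + β' • q2 with hw
    have hww : w ⬝ᵥ w = 1 := by
      rw [hw]
      simp only [dotProduct_add, add_dotProduct, smul_dotProduct, dotProduct_smul, smul_eq_mul]
      have hsum : α ^ 2 + β' ^ 2 = 1 := by
        have : α ^ 2 * (a * b) + β' ^ 2 * (a * b) = s2 - s1 := by
          rw [hα2, hβ2]; ring
        have h2 : (α ^ 2 + β' ^ 2) * (a * b) = 1 * (a * b) := by
          rw [← habs] at this ⊢; linarith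
        exact mul_right_cancel₀ hab.ne' h2
      linear_combination α ^ 2 * g11 + β' ^ 2 * g22 + α * β' * g12 + α * β' * g21 + hsum
    constructor
    · rw [euclNorm, hww, Real.sqrt_one]
    · rw [hquad w, hww]
      have hYw : Yh ⬝ᵥ w = α * (n1⁻¹ * (a * c + b * a ^ 2)) + β' * (n2⁻¹ * (a * c - b * a ^ 2)) := by
        rw [hw]
        simp only [dotProduct_add, dotProduct_smul, smul_eq_mul, gY1, gY2]
      have hZw : Zh ⬝ᵥ w = α * (n1⁻¹ * (a * b ^ 2 + b * c)) + β' * (n2⁻¹ * (a * b ^ 2 - b * c)) := by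
        rw [hw]
        simp only [dotProduct_add, dotProduct_smul, smul_eq_mul, gZ1, gZ2]
      rw [hYw, hZw]
      have prod_eq :
          (α * (n1⁻¹ * (a * c + b * a ^ 2)) + β' * (n2⁻¹ * (a * c - b * a ^ 2))) *
            (α * (n1⁻¹ * (a * b ^ 2 + b * c)) + β' * (n2⁻¹ * (a * b ^ 2 - b * c)))
          = α ^ 2 * (n1⁻¹ * n1⁻¹ * (a * b * (a * b + c) ^ 2))
            - β' ^ 2 * (n2⁻¹ * n2⁻¹ * (a * b * (a * b - c) ^ 2)) := by
        ring
      rw [prod_eq]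
      have h1 : n1⁻¹ * n1⁻¹ * (a * b * (a * b + c) ^ 2) = (a * b + c) / 2 := by
        have hcpos : 0 < a * b + c := by
          have h := e1 ▸ pow_pos hn1 2
          exact pos_of_mul_pos_left'' (by linarith [mul_pos ha hb] : 0 < (2 * a * b) * (a * b + c)) (by linarith [mul_pos ha hb])
        field_simp
        linear_combination (-1) * e1
      have h2 : n2⁻¹ * n2⁻¹ * (a * b * (a * b - c) ^ 2) = (a * b - c) / 2 := by
        have hcpos : 0 < a * b - c := by
          have h := e2 ▸ pow_pos hn2 2
          exact pos_of_mul_pos_left'' (by linarith [mul_pos ha hb] : 0 < (2 * a * b) * (a * b - c)) (by linarith [mul_pos ha hb])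
        field_simp
        linear_combination (-1) * e2
      rw [h1, h2]
      have hA2 : α ^ 2 * (a * b) = p + (a * b - c) / 2 := by rw [hα2, hs2]
      have hB2 : β' ^ 2 * (a * b) = (a * b + c) / 2 - p := by rw [hβ2, hs1]; ring
      have goal2 : (p * 1 - (α ^ 2 * ((a * b + c) / 2) - β' ^ 2 * ((a * b - c) / 2))) * (2 * (a * b))
          = 0 * (2 * (a * b)) := by
        linear_combination (-(a * b + c)) * hA2 + (a * b - c) * hB2
      exact mul_right_cancel₀ (by linarith [mul_pos ha hb] : (0:ℝ) < 2*(a*b)).ne' goal2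
  have hβ2 : β ^ 2 * (a * b) = -s1 := by
    rw [hβ, Real.sq_sqrt (by rw [habs]; exact div_nonneg (by linarith) hab.le), habs]
    field_simp
  have hβ2' : (-β) ^ 2 * (a * b) = -s1 := by rw [neg_pow]; simpa using hβ2
  obtain ⟨hp1, hp2⟩ := key β hβ2
  have hm' : ωm = α • q1 + (-β) • q2 := by rw [hωm, neg_smul, sub_eq_add_neg]
  obtain ⟨hm1, hm2⟩ := key (-β) hβ2'
  rw [← hωp] at hp1 hp2
  rw [← hm'] at hm1 hm2
  exact ⟨hp1, hm1, hp2, hm2⟩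
end

section
/- (Scenario 2: perfect prediction of y.) If X Xᵀ y = y (i.e., y lies in the column space of X), then ⟨Ŷ, Ẑ⟩ = ⟨y, z⟩; if in addition Ŷ and Ẑ are linearly independent, then condition (C) holds. -/
/-! Since `XXᵀy = y`, `⟨Ŷ, Ẑ⟩ = ⟨XXᵀy, z⟩ = ⟨y, z⟩`. Substituting this into (C) turns it into
`|⟨Ŷ, Ẑ⟩| < ‖Ŷ‖‖Ẑ‖`, the strict Cauchy–Schwarz inequality, which holds exactly when `Ŷ` and `Ẑ`
are not parallel. -/

open Matrix

theorem abs_real_inner_lt_norm_mul_norm_of_linearIndependent {F : Type*}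
    [NormedAddCommGroup F] [InnerProductSpace ℝ F] {x y : F}
    (h : LinearIndependent ℝ ![x, y]) : |inner ℝ x y| < ‖x‖ * ‖y‖ := by
  refine (abs_real_inner_le_norm x y).lt_of_ne fun heq => ?_
  have hx : x ≠ 0 := h.ne_zero 0
  have hy : y ≠ 0 := h.ne_zero 1
  obtain ⟨r, -, rfl⟩ := (norm_inner_eq_norm_iff (𝕜 := ℝ) hx hy).1 (by rwa [Real.norm_eq_abs])
  have := (LinearIndependent.pair_iff.1 h r (-1) (by simp)).2
  norm_num at this

theorem euclNorm_eq_norm_toLp {n : ℕ} (v : Fin n → ℝ) :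
    euclNorm v = ‖WithLp.toLp 2 v‖ := by
  rw [euclNorm, norm_eq_sqrt_real_inner, EuclideanSpace.inner_toLp_toLp, star_trivial]

theorem abs_dotProduct_lt_euclNorm_mul_euclNorm {n : ℕ} {u v : Fin n → ℝ}
    (h : LinearIndependent ℝ ![u, v]) : |u ⬝ᵥ v| < euclNorm u * euclNorm v := by
  have h₂ : LinearIndependent ℝ ![WithLp.toLp 2 u, WithLp.toLp 2 v] := by
    rw [LinearIndependent.pair_iff] at h ⊢
    intro s t hst
    exact h s t (congrArg WithLp.ofLp hst)
  have := abs_real_inner_lt_norm_mul_norm_of_linearIndependent h₂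
  rwa [EuclideanSpace.inner_toLp_toLp, star_trivial, dotProduct_comm,
    ← euclNorm_eq_norm_toLp, ← euclNorm_eq_norm_toLp] at this

theorem transpose_mulVec_dotProduct_transpose_mulVec {m n R : Type*} [Fintype m] [Fintype n]
    [CommSemiring R] {X : Matrix m n R} {y : m → R} (hy : X *ᵥ (Xᵀ *ᵥ y) = y) (z : m → R) :
    (Xᵀ *ᵥ y) ⬝ᵥ (Xᵀ *ᵥ z) = y ⬝ᵥ z := by
  rw [dotProduct_mulVec, vecMul_transpose, hy]

theorem conditionC_of_perfect_prediction_of_y_general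
    (N K : ℕ)
    (y z : Fin N → ℝ) (X : Matrix (Fin N) (Fin K) ℝ)
    (Yh Zh : Fin K → ℝ) (hYh : Yh = Xᵀ.mulVec y) (hZh : Zh = Xᵀ.mulVec z)
    (hXy : X.mulVec (Xᵀ.mulVec y) = y) :
    Yh ⬝ᵥ Zh = y ⬝ᵥ z ∧
      (LinearIndependent ℝ ![Yh, Zh] →
        (-(euclNorm Yh * euclNorm Zh) + Yh ⬝ᵥ Zh) / 2 < y ⬝ᵥ z ∧
          y ⬝ᵥ z < (euclNorm Yh * euclNorm Zh + Yh ⬝ᵥ Zh) / 2) := by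
  have hdot : Yh ⬝ᵥ Zh = y ⬝ᵥ z := by
    subst hYh hZh
    exact transpose_mulVec_dotProduct_transpose_mulVec hXy z
  refine ⟨hdot, fun hli => ?_⟩
  obtain ⟨hlo, hhi⟩ := abs_lt.1 (abs_dotProduct_lt_euclNorm_mul_euclNorm hli)
  constructor <;> linarith

/-- Scenario 2: if `y` lies in the column space of `X` (i.e. `XXᵀy = y`), then
`⟨Ŷ,Ẑ⟩ = ⟨y,z⟩`; if moreover `Ŷ` and `Ẑ` are linearly independent, then condition
(C) holds. -/
theorem conditionC_of_perfect_prediction_of_y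
    (N K : ℕ) (hN : 0 < N) (hK : 0 < K)
    (y z : Fin N → ℝ) (X : Matrix (Fin N) (Fin K) ℝ)
    (hX : Xᵀ * X = 1)
    (Yh Zh : Fin K → ℝ) (hYh : Yh = Xᵀ.mulVec y) (hZh : Zh = Xᵀ.mulVec z)
    (hXy : X.mulVec (Xᵀ.mulVec y) = y) :
    Yh ⬝ᵥ Zh = y ⬝ᵥ z ∧
      (LinearIndependent ℝ ![Yh, Zh] →
        (-(euclNorm Yh * euclNorm Zh) + Yh ⬝ᵥ Zh) / 2 < y ⬝ᵥ z ∧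
          y ⬝ᵥ z < (euclNorm Yh * euclNorm Zh + Yh ⬝ᵥ Zh) / 2) :=
  conditionC_of_perfect_prediction_of_y_general N K y z X Yh Zh hYh hZh hXy
end

section
/- (Scenario 3: perfect prediction of z.) If X Xᵀ z = z (i.e., z lies in the column space of X) and Ŷ and Ẑ are linearly independent, then condition (C) holds. -/
open Matrix

lemma euclNorm_eq {n : ℕ} (v : Fin n → ℝ) :
    euclNorm v = ‖(WithLp.equiv 2 (Fin n → ℝ)).symm v‖ := by
  rw [euclNorm, EuclideanSpace.norm_eq]
  congr 1
  simp [dotProduct, sq]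

lemma inner_eq_dot {n : ℕ} (v w : Fin n → ℝ) :
    (inner ℝ ((WithLp.equiv 2 (Fin n → ℝ)).symm v) ((WithLp.equiv 2 (Fin n → ℝ)).symm w) : ℝ)
      = v ⬝ᵥ w := by
  simp [PiLp.inner_apply, RCLike.inner_apply, dotProduct, mul_comm]

/-- Scenario 3: if `z` lies in the column space of `X` (i.e. `XXᵀz = z`) and
`Ŷ = Xᵀy`, `Ẑ = Xᵀz` are linearly independent, then condition (C) holds. -/
theorem conditionC_of_perfect_prediction_of_z
    (N K : ℕ) (hN : 0 < N) (hK : 0 < K)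
    (y z : Fin N → ℝ) (X : Matrix (Fin N) (Fin K) ℝ)
    (hX : Xᵀ * X = 1)
    (Yh Zh : Fin K → ℝ) (hYh : Yh = Xᵀ.mulVec y) (hZh : Zh = Xᵀ.mulVec z)
    (hXz : X.mulVec (Xᵀ.mulVec z) = z)
    (hli : LinearIndependent ℝ ![Yh, Zh]) :
    (-(euclNorm Yh * euclNorm Zh) + Yh ⬝ᵥ Zh) / 2 < y ⬝ᵥ z ∧
      y ⬝ᵥ z < (euclNorm Yh * euclNorm Zh + Yh ⬝ᵥ Zh) / 2 := by
  have hyz : y ⬝ᵥ z = Yh ⬝ᵥ Zh := by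
    rw [hYh, hZh, ← hXz]
    rw [dotProduct_mulVec, ← mulVec_transpose, hXz]
  set u := (WithLp.equiv 2 (Fin K → ℝ)).symm Yh with hu
  set v := (WithLp.equiv 2 (Fin K → ℝ)).symm Zh with hv
  have hnu : euclNorm Yh = ‖u‖ := euclNorm_eq Yh
  have hnv : euclNorm Zh = ‖v‖ := euclNorm_eq Zh
  have hd : Yh ⬝ᵥ Zh = (inner ℝ u v : ℝ) := (inner_eq_dot Yh Zh).symm
  -- linear independence facts
  have key : ∀ (a b : ℝ), a • Yh = b • Zh → a = 0 ∧ b = 0 := by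
    intro a b hab
    have h := (LinearIndependent.pair_iff.mp hli) a (-b)
      (by rw [neg_smul, ← hab]; abel)
    exact ⟨h.1, by linarith [h.2, neg_eq_zero.mp h.2]⟩
  have hZ0 : Zh ≠ 0 := by
    intro h0
    have := (key 0 1 (by simp [h0])).2
    exact one_ne_zero this
  have hY0 : Yh ≠ 0 := by
    intro h0
    have := (key 1 0 (by simp [h0])).1
    exact one_ne_zero this
  have hvne : v ≠ 0 := by
    intro h0; exact hZ0 (congrArg (WithLp.equiv 2 (Fin K → ℝ)) h0)
  have hune : u ≠ 0 := by
    intro h0; exact hY0 (congrArg (WithLp.equiv 2 (Fin K → ℝ)) h0)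
  have h1 : (inner ℝ u v : ℝ) < ‖u‖ * ‖v‖ := by
    rw [inner_lt_norm_mul_iff_real]
    intro h
    have hab : ‖v‖ • Yh = ‖u‖ • Zh := by simpa [hu, hv] using congrArg WithLp.ofLp h
    exact hvne (norm_eq_zero.mp (key _ _ hab).1)
  have h2 : -(‖u‖ * ‖v‖) < (inner ℝ u v : ℝ) := by
    have : (inner ℝ u (-v) : ℝ) < ‖u‖ * ‖-v‖ := by
      rw [inner_lt_norm_mul_iff_real]
      intro h
      have hab : ‖-v‖ • Yh = (-‖u‖) • Zh := by
        have : ‖-v‖ • Yh = ‖u‖ • (-Zh) := by simpa [hu, hv] using congrArg WithLp.ofLp h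
        rw [this]; module
      exact hvne (by simpa using norm_eq_zero.mp (key _ _ hab).1)
    simpa [inner_neg_right, neg_lt, norm_neg] using this
  constructor <;> rw [hyz, hnu, hnv, hd] <;> linarith
end

section
/- (Alignment of the second zero with Ŷ.) Assume Ŷ and Ẑ are linearly independent and ⟨Ŷ, Ẑ⟩ = ⟨y, z⟩. Then s₁ < 0 < s₂ and the vector ω̂₂ = α q₁ − β q₂ equals Ŷ/‖Ŷ‖ exactly. -/
open Matrix

noncomputable def toE {K : ℕ} (v : Fin K → ℝ) : EuclideanSpace ℝ (Fin K) :=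
  (WithLp.equiv 2 (Fin K → ℝ)).symm v

lemma euclNorm_eq_norm {K : ℕ} (v : Fin K → ℝ) : euclNorm v = ‖toE v‖ := by
  rw [euclNorm, EuclideanSpace.norm_eq]
  congr 1
  simp [toE, dotProduct, sq, Real.norm_eq_abs, abs_mul_abs_self]

lemma dot_eq_inner {K : ℕ} (v w : Fin K → ℝ) :
    v ⬝ᵥ w = (inner ℝ (toE v) (toE w) : ℝ) := by
  simp [toE, PiLp.inner_apply, RCLike.inner_apply, dotProduct, mul_comm]

lemma strictCS {K : ℕ} (v w : Fin K → ℝ) (hli : LinearIndependent ℝ ![v, w]) :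
    0 < euclNorm v ∧ 0 < euclNorm w ∧
      v ⬝ᵥ w < euclNorm v * euclNorm w ∧ -(euclNorm v * euclNorm w) < v ⬝ᵥ w := by
  have h2 := LinearIndependent.pair_iff.mp hli
  have hv : v ≠ 0 := by
    intro h; have := (h2 1 0 (by simp [h])).1; norm_num at this
  have hw : w ≠ 0 := by
    intro h; have := (h2 0 1 (by simp [h])).2; norm_num at this
  set x : EuclideanSpace ℝ (Fin K) := toE v with hx
  set yy : EuclideanSpace ℝ (Fin K) := toE w with hy
  have hinj : Function.Injective (toE (K := K)) :=
    (WithLp.equiv 2 (Fin K → ℝ)).symm.injective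
  have hxn : x ≠ 0 := fun h => hv (hinj (h.trans rfl))
  have hyn : yy ≠ 0 := fun h => hw (hinj (h.trans rfl))
  have hsmul : ∀ (c : ℝ) (u : Fin K → ℝ), c • toE u = toE (c • u) := by
    intro c u; rfl
  have hadd : ∀ (u u' : Fin K → ℝ), toE u + toE u' = toE (u + u') := by
    intro u u'; rfl
  have hnv : 0 < euclNorm v := by rw [euclNorm_eq_norm]; exact norm_pos_iff.mpr hxn
  have hnw : 0 < euclNorm w := by rw [euclNorm_eq_norm]; exact norm_pos_iff.mpr hyn
  refine ⟨hnv, hnw, ?_, ?_⟩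
  · rw [dot_eq_inner, euclNorm_eq_norm, euclNorm_eq_norm]
    apply inner_lt_norm_mul_iff_real.mpr
    intro h
    have h0 : ‖yy‖ • v + (-‖x‖) • w = 0 := by
      have h1 : toE (‖yy‖ • v + (-‖x‖) • w) = toE 0 := by
        rw [← hadd, ← hsmul, ← hsmul]
        show ‖yy‖ • x + (-‖x‖) • yy = toE 0
        rw [h]
        show ‖x‖ • yy + (-‖x‖) • yy = toE 0
        have : ‖x‖ • yy + (-‖x‖) • yy = 0 := by module
        rw [this]; rfl
      exact hinj h1
    exact absurd (h2 _ _ h0).1 (ne_of_gt (norm_pos_iff.mpr hyn))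
  · rw [dot_eq_inner, euclNorm_eq_norm, euclNorm_eq_norm]
    have h3 : (inner ℝ (-x) yy : ℝ) < ‖-x‖ * ‖yy‖ := by
      apply inner_lt_norm_mul_iff_real.mpr
      intro h
      have h0 : ‖yy‖ • v + ‖x‖ • w = 0 := by
        have h1 : toE (‖yy‖ • v + ‖x‖ • w) = toE 0 := by
          rw [← hadd, ← hsmul, ← hsmul]
          show ‖yy‖ • x + ‖x‖ • yy = toE 0
          rw [norm_neg] at h
          have : ‖yy‖ • x = -(‖x‖ • yy) := by
            have := h
            rw [smul_neg] at this
            linear_combination (norm := module) -this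
          rw [this]
          show -(‖x‖ • yy) + ‖x‖ • yy = toE 0
          have h4 : -(‖x‖ • yy) + ‖x‖ • yy = 0 := by module
          rw [h4]; rfl
        exact hinj h1
      exact absurd (h2 _ _ h0).1 (ne_of_gt (norm_pos_iff.mpr hyn))
    rw [inner_neg_left, norm_neg] at h3
    linarith

/-- Alignment of the second zero with `Ŷ`: if `Ŷ = Xᵀy` and `Ẑ = Xᵀz` are linearly
independent and `⟨Ŷ,Ẑ⟩ = ⟨y,z⟩`, then `s₁ < 0 < s₂` and
`ω̂₂ = α q₁ − β q₂ = Ŷ/‖Ŷ‖`. -/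
theorem second_zero_aligns_with_Yhat
    (N K : ℕ) (hN : 0 < N) (hK : 0 < K)
    (y z : Fin N → ℝ) (X : Matrix (Fin N) (Fin K) ℝ)
    (hX : Xᵀ * X = 1)
    (Yh Zh : Fin K → ℝ) (hYh : Yh = Xᵀ.mulVec y) (hZh : Zh = Xᵀ.mulVec z)
    (hli : LinearIndependent ℝ ![Yh, Zh])
    (heq : Yh ⬝ᵥ Zh = y ⬝ᵥ z)
    (q1 q2 : Fin K → ℝ)
    (hq1 : q1 = (euclNorm (euclNorm Yh • Zh + euclNorm Zh • Yh))⁻¹ •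
        (euclNorm Yh • Zh + euclNorm Zh • Yh))
    (hq2 : q2 = (euclNorm (euclNorm Yh • Zh - euclNorm Zh • Yh))⁻¹ •
        (euclNorm Yh • Zh - euclNorm Zh • Yh))
    (s1 s2 α β : ℝ)
    (hs1 : s1 = y ⬝ᵥ z - (euclNorm Yh * euclNorm Zh + Yh ⬝ᵥ Zh) / 2)
    (hs2 : s2 = y ⬝ᵥ z + (euclNorm Yh * euclNorm Zh - Yh ⬝ᵥ Zh) / 2)
    (hα : α = Real.sqrt (s2 / (s2 - s1)))
    (hβ : β = Real.sqrt (-s1 / (s2 - s1))) :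
    s1 < 0 ∧ 0 < s2 ∧ α • q1 - β • q2 = (euclNorm Yh)⁻¹ • Yh := by
  obtain ⟨ha, hb, hc1, hc2⟩ := strictCS Yh Zh hli
  set a := euclNorm Yh with hadef
  set b := euclNorm Zh with hbdef
  set c := Yh ⬝ᵥ Zh with hcdef
  rw [← heq] at hs1 hs2
  have hab : 0 < a * b := mul_pos ha hb
  have hP : 0 < a * b + c := by linarith
  have hM : 0 < a * b - c := by linarith
  have hs1' : s1 = (c - a * b) / 2 := by rw [hs1]; ring
  have hs2' : s2 = (a * b + c) / 2 := by rw [hs2]; ring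
  refine ⟨by rw [hs1']; linarith, by rw [hs2']; linarith, ?_⟩
  -- square facts
  have hdotnn : ∀ v : Fin K → ℝ, 0 ≤ v ⬝ᵥ v := fun v =>
    Finset.sum_nonneg fun i _ => mul_self_nonneg _
  have haa : Yh ⬝ᵥ Yh = a ^ 2 := by
    rw [hadef, euclNorm, Real.sq_sqrt (hdotnn Yh)]
  have hbb : Zh ⬝ᵥ Zh = b ^ 2 := by
    rw [hbdef, euclNorm, Real.sq_sqrt (hdotnn Zh)]
  have hcc : Zh ⬝ᵥ Yh = c := by rw [dotProduct_comm]
  -- norms of the combinations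
  have hdot1 : (a • Zh + b • Yh) ⬝ᵥ (a • Zh + b • Yh) = 2 * a * b * (a * b + c) := by
    simp only [add_dotProduct, dotProduct_add, smul_dotProduct, dotProduct_smul,
      smul_eq_mul, haa, hbb, hcc, ← hcdef]
    ring
  have hdot2 : (a • Zh - b • Yh) ⬝ᵥ (a • Zh - b • Yh) = 2 * a * b * (a * b - c) := by
    simp only [sub_dotProduct, dotProduct_sub, smul_dotProduct, dotProduct_smul,
      smul_eq_mul, haa, hbb, hcc, ← hcdef]
    ring
  have hn1 : euclNorm (a • Zh + b • Yh) = Real.sqrt (2 * a * b * (a * b + c)) := by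
    rw [euclNorm, hdot1]
  have hn2 : euclNorm (a • Zh - b • Yh) = Real.sqrt (2 * a * b * (a * b - c)) := by
    rw [euclNorm, hdot2]
  have habne : (a * b) ≠ 0 := ne_of_gt hab
  have hss : s2 - s1 = a * b := by rw [hs1', hs2']; ring
  -- coefficient computations
  have k1 : α * (euclNorm (a • Zh + b • Yh))⁻¹ = (2 * (a * b))⁻¹ := by
    rw [hα, hn1, hss, hs2', ← Real.sqrt_inv, ← Real.sqrt_mul (div_nonneg (by linarith) hab.le)]
    have : (a * b + c) / 2 / (a * b) * (2 * a * b * (a * b + c))⁻¹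
        = ((2 * (a * b))⁻¹) ^ 2 := by
      field_simp
    rw [this, Real.sqrt_sq (by positivity : (0:ℝ) ≤ (2 * (a * b))⁻¹)]
  have k2 : β * (euclNorm (a • Zh - b • Yh))⁻¹ = (2 * (a * b))⁻¹ := by
    rw [hβ, hn2, hss, hs1', ← Real.sqrt_inv, ← Real.sqrt_mul (div_nonneg (by linarith) hab.le)]
    have h5 : -((c - a * b) / 2) / (a * b) = (a * b - c) / 2 / (a * b) := by ring
    rw [h5]
    have : (a * b - c) / 2 / (a * b) * (2 * a * b * (a * b - c))⁻¹
        = ((2 * (a * b))⁻¹) ^ 2 := by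
      field_simp
    rw [this, Real.sqrt_sq (by positivity : (0:ℝ) ≤ (2 * (a * b))⁻¹)]
  rw [hq1, hq2, smul_smul, smul_smul, k1, k2]
  funext i
  simp only [Pi.sub_apply, Pi.smul_apply, Pi.add_apply, smul_eq_mul]
  field_simp
  ring
end
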